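/- For 0 < t < 1 and real x, the determinant of the 2×2 matrix φ(e^{ix}) = [[c, d],[d̃, c̃]], where c(e^{ix}) = (t cos x + sin²x)/((e^{-ix}-t)√(t²+sin²x+sin⁴x)), d(e^{ix}) = sin x/√(t²+sin²x+sin⁴x), c̃(e^{ix}) = c(e^{-ix}), d̃(e^{ix}) = d(e^{-ix}), equals 1/(t²-2t cos x+1). -/

import Mathlib

/-!
Write `q = t² - 2t cos x + 1 = (e^{-ix} - t)(e^{ix} - t)` and `S = √(t² + sin²x + sin⁴x)`.
Since `d(-x) = -d(x)`, the determinant is `((t cos x + sin²x)² + sin²x · q) / (q S²)`, and by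
`cos²x + sin²x = 1` the numerator is exactly `t² + sin²x + sin⁴x = S²`.
-/

open Complex in
theorem exp_neg_mul_I_sub_mul_exp_mul_I_sub (z t : ℂ) :
    (exp (-z * I) - t) * (exp (z * I) - t) = t ^ 2 - 2 * t * cos z + 1 := by
  have hinv : exp (-z * I) * exp (z * I) = 1 := by rw [← exp_add]; simp
  linear_combination hinv + t * two_cos z

theorem sq_add_sin_sq_mul (t x : ℝ) :
    (t * Real.cos x + Real.sin x ^ 2) ^ 2 + Real.sin x ^ 2 * (t ^ 2 - 2 * t * Real.cos x + 1)
      = t ^ 2 + Real.sin x ^ 2 + Real.sin x ^ 4 := by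
  linear_combination t ^ 2 * Real.cos_sq_add_sin_sq x

theorem sq_sub_two_mul_cos_add_one_pos {t : ℝ} (ht : |t| < 1) (x : ℝ) :
    0 < t ^ 2 - 2 * t * Real.cos x + 1 := by
  have hcos : t * Real.cos x ≤ |t| := by
    calc t * Real.cos x ≤ |t * Real.cos x| := le_abs_self _
      _ = |t| * |Real.cos x| := abs_mul _ _
      _ ≤ |t| * 1 := by gcongr; exact Real.abs_cos_le_one x
      _ = |t| := mul_one _
  nlinarith [sq_abs t]

theorem det_fin_two_div_of_sq_add_sq_mul_eq {K : Type*} [Field K] {a b r e e' q : K}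
    (he : e * e' = q) (hq : q ≠ 0) (hr : r ≠ 0) (hab : a ^ 2 + b ^ 2 * q = r ^ 2) :
    !![a / (e * r), b / r; -b / r, a / (e' * r)].det = 1 / q := by
  subst he
  have he0 : e ≠ 0 := left_ne_zero_of_mul hq
  have he0' : e' ≠ 0 := right_ne_zero_of_mul hq
  rw [Matrix.det_fin_two_of]
  field_simp
  linear_combination hab

theorem det_phi (t : ℝ) (ht0 : 0 < t) (ht1 : t < 1) (x : ℝ)
    (c d : ℝ → ℂ)
    (hc : ∀ y : ℝ, c y = ((t * Real.cos y + Real.sin y ^ 2 : ℝ) : ℂ)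
        / ((Complex.exp (-y * Complex.I) - (t : ℂ))
            * (Real.sqrt (t ^ 2 + Real.sin y ^ 2 + Real.sin y ^ 4) : ℂ)))
    (hd : ∀ y : ℝ, d y = ((Real.sin y : ℝ) : ℂ)
        / ((Real.sqrt (t ^ 2 + Real.sin y ^ 2 + Real.sin y ^ 4) : ℝ) : ℂ)) :
    (Matrix.det !![c x, d x; d (-x), c (-x)])
      = 1 / ((t : ℂ) ^ 2 - 2 * (t : ℂ) * (Real.cos x : ℂ) + 1) := by
  have hq : 0 < t ^ 2 - 2 * t * Real.cos x + 1 :=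
    sq_sub_two_mul_cos_add_one_pos (abs_lt.2 ⟨by linarith, ht1⟩) x
  have hS : 0 < t ^ 2 + Real.sin x ^ 2 + Real.sin x ^ 4 := by positivity
  have hprod : (Complex.exp (-x * Complex.I) - t) * (Complex.exp (-(-x : ℝ) * Complex.I) - t)
      = (t : ℂ) ^ 2 - 2 * t * (Real.cos x : ℂ) + 1 := by
    rw [Complex.ofReal_neg, neg_neg, exp_neg_mul_I_sub_mul_exp_mul_I_sub, Complex.ofReal_cos]
  rw [hc, hc, hd, hd, Real.sin_neg, Real.cos_neg, neg_sq, Even.neg_pow (by decide),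
    Complex.ofReal_neg]
  refine det_fin_two_div_of_sq_add_sq_mul_eq hprod (by exact_mod_cast hq.ne')
    (by exact_mod_cast (Real.sqrt_pos.2 hS).ne') ?_
  exact_mod_cast (sq_add_sin_sq_mul t x).trans (Real.sq_sqrt hS.le).symm
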